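/- arXiv:1001.2194 — 7 statements merged into one kernel-verified Lean document; each statement's English description precedes it below -/
import Mathlib

section
/- Let A be the algebra with basis e₁,…,eₙ, e_i·e_j = e_{max(i,j)}, unit e₁. Define Δ(e_i) = Σ_{k=i}^{n−1} (e_k−e_{k+1})⊗(e_k−e_{k+1}) + eₙ⊗eₙ. Then Δ is coassociative: (Δ⊗id)∘Δ = (id⊗Δ)∘Δ. -/
open TensorProduct

noncomputable def maxBasis (K : Type*) [Field K] (n : ℕ) (i : Fin n) : Fin n → K :=
  fun j => if i ≤ j then 1 else 0

noncomputable def orthIdem (K : Type*) [Field K] (n : ℕ) (i : Fin n) : Fin n → K :=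
  if h : i.val + 1 < n then maxBasis K n i - maxBasis K n ⟨i.val + 1, h⟩
  else maxBasis K n i

/-- The paper's formula `Δ(e_i) = Σ_{k=i}^{n-1} (e_k − e_{k+1}) ⊗ (e_k − e_{k+1}) + eₙ ⊗ eₙ`. -/
noncomputable def maxComulBasis (K : Type*) [Field K] (n : ℕ) (i : Fin n) :
    (Fin n → K) ⊗[K] (Fin n → K) :=
  ∑ k ∈ Finset.univ.filter (fun k => i ≤ k), (orthIdem K n k) ⊗ₜ[K] (orthIdem K n k)

/-- The linear map `Δ` on `A = span(e₁,…,eₙ)` extending the above formula. -/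
noncomputable def maxComul (K : Type*) [Field K] (n : ℕ) :
    (Fin n → K) →ₗ[K] (Fin n → K) ⊗[K] (Fin n → K) :=
  ∑ k : Fin n,
    (LinearMap.proj k : (Fin n → K) →ₗ[K] K).smulRight
      ((orthIdem K n k) ⊗ₜ[K] (orthIdem K n k))

lemma orth_apply (K : Type*) [Field K] (n : ℕ) (k j : Fin n) :
    orthIdem K n k j = if k = j then 1 else 0 := by
  unfold orthIdem maxBasis
  split
  · next h =>
    simp only [Pi.sub_apply, Fin.le_def, Fin.ext_iff]
    split <;> split <;> split <;> simp_all <;> omega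
  · next h =>
    simp only [Fin.le_def, Fin.ext_iff]
    have := j.isLt
    split <;> split <;> simp_all <;> omega

lemma maxComul_apply (K : Type*) [Field K] (n : ℕ) (v : Fin n → K) :
    maxComul K n v = ∑ k : Fin n, v k • (orthIdem K n k ⊗ₜ[K] orthIdem K n k) := by
  simp [maxComul, LinearMap.sum_apply]

lemma maxComul_orth (K : Type*) [Field K] (n : ℕ) (k : Fin n) :
    maxComul K n (orthIdem K n k) = orthIdem K n k ⊗ₜ[K] orthIdem K n k := by
  rw [maxComul_apply]
  rw [Finset.sum_eq_single k]
  · simp [orth_apply]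
  · intro b _ hb
    rw [orth_apply]
    simp [(Ne.symm hb)]
  · simp

set_option synthInstance.maxHeartbeats 400000 in
/-- `Δ` takes the stated values on the basis and is coassociative. -/
theorem stmt8 (K : Type*) [Field K] (n : ℕ) [NeZero n] :
    (∀ i : Fin n, maxComul K n (maxBasis K n i) = maxComulBasis K n i)
    ∧ (∀ v : Fin n → K,
        (TensorProduct.assoc K (Fin n → K) (Fin n → K) (Fin n → K))
            (TensorProduct.map (maxComul K n) LinearMap.id (maxComul K n v))
          = TensorProduct.map LinearMap.id (maxComul K n) (maxComul K n v)) := by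
  constructor
  · intro i
    rw [maxComul_apply, maxComulBasis, Finset.sum_filter]
    refine Finset.sum_congr rfl fun k _ => ?_
    simp [maxBasis, ite_smul]
  · intro v
    rw [maxComul_apply, map_sum, map_sum, map_sum]
    refine Finset.sum_congr rfl fun k _ => ?_
    simp [TensorProduct.map_tmul, maxComul_orth, TensorProduct.smul_tmul']
end

section
/- Let A be the algebra with basis e₁,…,eₙ, e_i·e_j = e_{max(i,j)}. Define Δ(e_i) = Σ_{k=i}^{n−1} (e_k−e_{k+1})⊗(e_k−e_{k+1}) + eₙ⊗eₙ and ε(e_i) = n − i + 1. Then ε is a counit: (ε⊗id)Δ(e_i) = e_i = (id⊗ε)Δ(e_i) for all i. -/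
open TensorProduct

/-- The counit `ε` with `ε(e_i) = n − i + 1` (1-indexed), i.e. `ε(e_i) = n − i` here. -/
noncomputable def maxCounit (K : Type*) [Field K] (n : ℕ) : (Fin n → K) →ₗ[K] K :=
  ∑ k : Fin n, (LinearMap.proj k : (Fin n → K) →ₗ[K] K)

lemma orthIdem_eq (K : Type*) [Field K] (n : ℕ) (k : Fin n) :
    orthIdem K n k = Pi.single k 1 := by
  funext j
  have hj := j.isLt
  simp only [orthIdem]
  split_ifs with h
  · simp only [maxBasis, Pi.sub_apply, Pi.single_apply, Fin.le_def, Fin.ext_iff]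
    split_ifs <;> first | ring1 | omega
  · simp only [maxBasis, Pi.single_apply, Fin.le_def, Fin.ext_iff]
    split_ifs <;> first | rfl | omega

lemma counit_orthIdem (K : Type*) [Field K] (n : ℕ) (k : Fin n) :
    maxCounit K n (orthIdem K n k) = 1 := by
  rw [orthIdem_eq]
  simp [maxCounit, LinearMap.sum_apply, Pi.single_apply]

lemma sum_orthIdem (K : Type*) [Field K] (n : ℕ) (i : Fin n) :
    ∑ k ∈ Finset.univ.filter (fun k => i ≤ k), orthIdem K n k = maxBasis K n i := by
  funext j
  simp [Finset.sum_apply, orthIdem_eq, Pi.single_apply, maxBasis]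

set_option synthInstance.maxHeartbeats 1000000
/-- `ε` is a counit for `Δ`:
`(ε⊗id)Δ(e_i) = e_i = (id⊗ε)Δ(e_i)` for all `i`. -/
theorem stmt9 (K : Type*) [Field K] [CharZero K] (n : ℕ) [NeZero n] :
    (∀ i : Fin n, maxComul K n (maxBasis K n i) = maxComulBasis K n i)
    ∧ (∀ i : Fin n, maxCounit K n (maxBasis K n i) = (n : K) - (i.val : K))
    ∧ (∀ i : Fin n,
        (TensorProduct.lid K (Fin n → K))
            (TensorProduct.map (maxCounit K n) LinearMap.id
              (maxComul K n (maxBasis K n i))) = maxBasis K n i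
        ∧ (TensorProduct.rid K (Fin n → K))
            (TensorProduct.map LinearMap.id (maxCounit K n)
              (maxComul K n (maxBasis K n i))) = maxBasis K n i) := by
  have h1 : ∀ i : Fin n, maxComul K n (maxBasis K n i) = maxComulBasis K n i := by
    intro i
    simp only [maxComul, LinearMap.sum_apply, LinearMap.smulRight_apply,
      LinearMap.proj_apply, maxComulBasis, maxBasis]
    rw [Finset.sum_filter]
    refine Finset.sum_congr rfl fun k _ => ?_
    split_ifs <;> simp
  refine ⟨h1, ?_, ?_⟩
  · intro i
    simp only [maxCounit, LinearMap.sum_apply, LinearMap.proj_apply, maxBasis]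
    rw [Finset.sum_boole,
      show Finset.filter (fun x => i ≤ x) Finset.univ = Finset.Ici i from
        Finset.filter_le_eq_Ici, Fin.card_Ici, Nat.cast_sub (le_of_lt i.isLt)]
  · intro i
    rw [h1]
    unfold maxComulBasis
    constructor
    · rw [map_sum, map_sum]
      simp only [TensorProduct.map_tmul, LinearMap.id_coe, id_eq, counit_orthIdem,
        TensorProduct.lid_tmul, one_smul]
      exact sum_orthIdem K n i
    · rw [map_sum, map_sum]
      simp only [TensorProduct.map_tmul, LinearMap.id_coe, id_eq, counit_orthIdem,
        TensorProduct.rid_tmul, one_smul]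
      exact sum_orthIdem K n i
end

section
/- Let A be the algebra with basis e₁,…,eₙ, e_i·e_j = e_{max(i,j)}, unit e₁ = 1, with Δ and ε as above and S = id. Then the first antipode axiom holds: m(id⊗S)Δ(e_i) = (ε⊗id)(Δ(1)•(e_i⊗1)), and both sides equal e_i. -/
set_option synthInstance.maxHeartbeats 1000000
set_option maxHeartbeats 1000000
open TensorProduct

lemma orthIdem_apply (K : Type*) [Field K] (n : ℕ) (k j : Fin n) :
    orthIdem K n k j = if j = k then 1 else 0 := by
  have hj := j.isLt
  unfold orthIdem maxBasis
  by_cases h : k.val + 1 < n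
  · rw [dif_pos h]
    show (if k ≤ j then (1:K) else 0) - (if (⟨k.val+1,h⟩:Fin n) ≤ j then 1 else 0) = _
    rcases lt_trichotomy j.val k.val with hc|hc|hc
    · rw [if_neg (by simp only [Fin.le_def]; omega),
        if_neg (show ¬(⟨k.val+1,h⟩:Fin n) ≤ j by simp only [Fin.le_def]; omega),
        if_neg (by simp only [Fin.ext_iff]; omega)]
      ring
    · rw [if_pos (by simp only [Fin.le_def]; omega),
        if_neg (show ¬(⟨k.val+1,h⟩:Fin n) ≤ j by simp only [Fin.le_def]; omega),
        if_pos (by simp only [Fin.ext_iff]; omega)]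
      ring
    · rw [if_pos (by simp only [Fin.le_def]; omega),
        if_pos (show (⟨k.val+1,h⟩:Fin n) ≤ j by simp only [Fin.le_def]; omega),
        if_neg (by simp only [Fin.ext_iff]; omega)]
      ring
  · rw [dif_neg h]
    show (if k ≤ j then (1:K) else 0) = _
    rcases eq_or_ne j.val k.val with hc|hc
    · rw [if_pos (by simp only [Fin.le_def]; omega), if_pos (by simp only [Fin.ext_iff]; omega)]
    · rw [if_neg (by simp only [Fin.le_def]; omega), if_neg (by simp only [Fin.ext_iff]; omega)]

lemma orthIdem_mul_self (K : Type*) [Field K] (n : ℕ) (k : Fin n) :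
    orthIdem K n k * orthIdem K n k = orthIdem K n k := by
  funext j
  simp only [Pi.mul_apply, orthIdem_apply]
  split_ifs <;> norm_num

lemma orthIdem_mul_maxBasis (K : Type*) [Field K] (n : ℕ) (k i : Fin n) :
    orthIdem K n k * maxBasis K n i = if i ≤ k then orthIdem K n k else 0 := by
  by_cases h : i ≤ k
  · rw [if_pos h]; funext j
    simp only [Pi.mul_apply, orthIdem_apply, maxBasis]
    split_ifs <;> simp_all <;> omega
  · rw [if_neg h]; funext j
    simp only [Pi.mul_apply, orthIdem_apply, maxBasis, Pi.zero_apply]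
    split_ifs <;> simp_all <;> omega

lemma comul_maxBasis (K : Type*) [Field K] (n : ℕ) (i : Fin n) :
    maxComul K n (maxBasis K n i) = maxComulBasis K n i := by
  unfold maxComul maxComulBasis
  rw [LinearMap.sum_apply, Finset.sum_filter]
  congr 1
  funext k
  simp only [LinearMap.smulRight_apply, LinearMap.proj_apply, maxBasis]
  split_ifs <;> simp

lemma maxBasis_zero (K : Type*) [Field K] (n : ℕ) [NeZero n] :
    maxBasis K n 0 = 1 := by
  funext j
  simp [maxBasis, Fin.zero_le]

/-- first antipode axiom with `S = id`:
`m(id⊗S)Δ(e_i) = (ε⊗id)(Δ(1)•(e_i⊗1))`, and both sides equal `e_i`. -/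
theorem stmt12 (K : Type*) [Field K] [CharZero K] (n : ℕ) [NeZero n]
    (S : (Fin n → K) →ₗ[K] (Fin n → K)) (hS : S = LinearMap.id) :
    (∀ i : Fin n, maxComul K n (maxBasis K n i) = maxComulBasis K n i)
    ∧ maxBasis K n 0 = 1
    ∧ (∀ i : Fin n,
        LinearMap.mul' K (Fin n → K)
            (TensorProduct.map LinearMap.id S (maxComul K n (maxBasis K n i)))
          = (TensorProduct.lid K (Fin n → K))
              (TensorProduct.map (maxCounit K n) LinearMap.id
                (maxComul K n 1 * (maxBasis K n i ⊗ₜ[K] (1 : Fin n → K)))))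
    ∧ (∀ i : Fin n,
        LinearMap.mul' K (Fin n → K)
            (TensorProduct.map LinearMap.id S (maxComul K n (maxBasis K n i)))
          = maxBasis K n i) := by
  subst hS
  have lhs_eq : ∀ i : Fin n,
      LinearMap.mul' K (Fin n → K)
          (TensorProduct.map LinearMap.id LinearMap.id (maxComul K n (maxBasis K n i)))
        = maxBasis K n i := by
    intro i
    rw [comul_maxBasis]
    unfold maxComulBasis
    rw [map_sum, map_sum]
    simp only [TensorProduct.map_tmul, LinearMap.id_coe, id_eq, LinearMap.mul'_apply,
      orthIdem_mul_self]
    exact sum_orthIdem K n i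
  have rhs_eq : ∀ i : Fin n,
      (TensorProduct.lid K (Fin n → K))
          (TensorProduct.map (maxCounit K n) LinearMap.id
            (maxComul K n 1 * (maxBasis K n i ⊗ₜ[K] (1 : Fin n → K))))
        = maxBasis K n i := by
    intro i
    nth_rewrite 1 [← maxBasis_zero K n]
    rw [comul_maxBasis]
    unfold maxComulBasis
    rw [show Finset.univ.filter (fun k => (0:Fin n) ≤ k) = Finset.univ by
      simp [Fin.zero_le]]
    rw [Finset.sum_mul]
    have : ∀ k : Fin n,
        (orthIdem K n k ⊗ₜ[K] orthIdem K n k) * (maxBasis K n i ⊗ₜ[K] (1 : Fin n → K))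
          = (if i ≤ k then orthIdem K n k else 0) ⊗ₜ[K] orthIdem K n k := by
      intro k
      rw [Algebra.TensorProduct.tmul_mul_tmul, mul_one, orthIdem_mul_maxBasis]
    simp only [this]
    rw [map_sum, map_sum]
    simp only [TensorProduct.map_tmul, LinearMap.id_coe, id_eq, TensorProduct.lid_tmul,
      apply_ite (maxCounit K n), counit_orthIdem, map_zero, ite_smul, one_smul, zero_smul]
    rw [← Finset.sum_filter]
    exact sum_orthIdem K n i
  refine ⟨comul_maxBasis K n, maxBasis_zero K n, fun i => ?_, lhs_eq⟩
  rw [lhs_eq, rhs_eq]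
end

section
/- Let B be a bialgebra over K with unit e₂, and let B' = K·e₁ ⊕ B be the algebra obtained by adjoining a new unit e₁ (so e₁·x = x·e₁ = x for all x ∈ B'). Extend the comultiplication by Δ(e₁) = (e₁−e₂)⊗(e₁−e₂) + e₂⊗e₂ and the counit by ε(e₁) = 2. Then Δ : B' → B'⊗B' is coassociative and multiplicative (Δ(x·y) = Δ(x)•Δ(y)), and ε satisfies the counit axioms on B'. -/
/-!
Write `e = inr 1` for the old unit and `u = 1 - e`. These are orthogonal idempotents with
`u * inr b = inr b * u = 0`, and `Δ 1 = u ⊗ u + e ⊗ e` splits as the sum of two grouplike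
elements: `Δ u = u ⊗ u`, `Δ e = e ⊗ e`, `ε u = ε e = 1`. Coassociativity and the counit laws
hold at grouplike elements and, through `Δ ∘ inr = (inr ⊗ inr) ∘ Δ_B`, on the image of `B`,
hence everywhere by linearity. For multiplicativity, `Δ 1` is an idempotent acting as the
identity on the image of `B ⊗ B`, where `inr ⊗ inr` is multiplicative.
-/

open TensorProduct Unitization

theorem TensorProduct.map_mul_of_map_mul {R A B C D : Type*} [CommSemiring R]
    [Semiring A] [Algebra R A] [Semiring B] [Algebra R B]
    [Semiring C] [Algebra R C] [Semiring D] [Algebra R D] {f : A →ₗ[R] C} {g : B →ₗ[R] D}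
    (hf : ∀ x y, f (x * y) = f x * f y) (hg : ∀ x y, g (x * y) = g x * g y)
    (x y : A ⊗[R] B) : map f g (x * y) = map f g x * map f g y := by
  induction x with
  | zero => simp
  | add x x' hx hx' => simp only [add_mul, map_add, hx, hx']
  | tmul a b =>
    induction y with
    | zero => simp
    | add y y' hy hy' => simp only [mul_add, map_add, hy, hy']
    | tmul c d => simp only [Algebra.TensorProduct.tmul_mul_tmul, map_tmul, hf, hg]

section Coalgebra

variable {R M N : Type*} [CommSemiring R] [AddCommMonoid M] [Module R M]
  [AddCommMonoid N] [Module R N] {δ : N →ₗ[R] N ⊗[R] N} {ε : N →ₗ[R] R}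

theorem coassoc_apply_of_comul_eq_tmul {x : N} (hx : δ x = x ⊗ₜ x) :
    TensorProduct.assoc R N N N (map δ LinearMap.id (δ x)) = map LinearMap.id δ (δ x) := by
  simp [hx]

theorem lid_map_counit_apply_of_comul_eq_tmul {x : N} (hx : δ x = x ⊗ₜ x) (hε : ε x = 1) :
    TensorProduct.lid R N (map ε LinearMap.id (δ x)) = x := by
  simp [hx, hε]

theorem rid_map_counit_apply_of_comul_eq_tmul {x : N} (hx : δ x = x ⊗ₜ x) (hε : ε x = 1) :
    TensorProduct.rid R N (map LinearMap.id ε (δ x)) = x := by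
  simp [hx, hε]

variable [Coalgebra R M] {i : M →ₗ[R] N}

theorem coassoc_apply_of_comul_comp (hi : ∀ m, δ (i m) = map i i (Coalgebra.comul m)) (m : M) :
    TensorProduct.assoc R N N N (map δ LinearMap.id (δ (i m))) =
      map LinearMap.id δ (δ (i m)) := by
  have hi' : δ ∘ₗ i = map i i ∘ₗ Coalgebra.comul := LinearMap.ext hi
  calc TensorProduct.assoc R N N N (map δ LinearMap.id (δ (i m)))
      = TensorProduct.assoc R N N N
          (map (map i i) i ((Coalgebra.comul (R := R)).rTensor M (Coalgebra.comul m))) := by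
        simp only [hi, LinearMap.rTensor, map_map, hi', LinearMap.id_comp, LinearMap.comp_id]
    _ = map i (map i i) ((Coalgebra.comul (R := R)).lTensor M (Coalgebra.comul m)) := by
        rw [← map_map_assoc, Coalgebra.coassoc_apply]
    _ = map LinearMap.id δ (δ (i m)) := by
        simp only [hi, LinearMap.lTensor, map_map, hi', LinearMap.id_comp, LinearMap.comp_id]

theorem lid_map_counit_apply_of_comul_comp (hi : ∀ m, δ (i m) = map i i (Coalgebra.comul m))
    (hε : ∀ m, ε (i m) = Coalgebra.counit m) (m : M) :
    TensorProduct.lid R N (map ε LinearMap.id (δ (i m))) = i m := by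
  have hε' : ε ∘ₗ i = Coalgebra.counit := LinearMap.ext hε
  calc TensorProduct.lid R N (map ε LinearMap.id (δ (i m)))
      = TensorProduct.lid R N (i.lTensor R ((Coalgebra.counit (R := R)).rTensor M
          (Coalgebra.comul m))) := by
        simp only [hi, LinearMap.rTensor, LinearMap.lTensor, map_map, hε', LinearMap.id_comp,
          LinearMap.comp_id]
    _ = i m := by simp [Coalgebra.rTensor_counit_comul]

theorem rid_map_counit_apply_of_comul_comp (hi : ∀ m, δ (i m) = map i i (Coalgebra.comul m))
    (hε : ∀ m, ε (i m) = Coalgebra.counit m) (m : M) :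
    TensorProduct.rid R N (map LinearMap.id ε (δ (i m))) = i m := by
  have hε' : ε ∘ₗ i = Coalgebra.counit := LinearMap.ext hε
  calc TensorProduct.rid R N (map LinearMap.id ε (δ (i m)))
      = TensorProduct.rid R N (i.rTensor R ((Coalgebra.counit (R := R)).lTensor M
          (Coalgebra.comul m))) := by
        simp only [hi, LinearMap.rTensor, LinearMap.lTensor, map_map, hε', LinearMap.id_comp,
          LinearMap.comp_id]
    _ = i m := by simp [Coalgebra.lTensor_counit_comul]

end Coalgebra

namespace Unitization

section
variable {R A : Type*} [CommSemiring R] [NonUnitalSemiring A] [Module R A]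

theorem inl_eq_smul_one (r : R) : (inl r : Unitization R A) = r • 1 := by
  ext <;> simp

@[elab_as_elim]
theorem induction_smul_one {P : Unitization R A → Prop}
    (smul_one_add_inr : ∀ (r : R) (a : A), P (r • 1 + inr a)) (x : Unitization R A) : P x :=
  x.ind fun r a => inl_eq_smul_one (A := A) r ▸ smul_one_add_inr r a

theorem linearMap_ext_one {N : Type*} [AddCommMonoid N] [Module R N]
    ⦃f g : Unitization R A →ₗ[R] N⦄ (h1 : f 1 = g 1) (hr : ∀ a : A, f a = g a) : f = g :=
  linearMap_ext (fun r => by rw [inl_eq_smul_one, map_smul, map_smul, h1]) hr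

end

section
variable {R A : Type*} [CommRing R] [Ring A] [Algebra R A]

theorem inr_one_mul_inr (a : A) : (inr 1 : Unitization R A) * inr a = inr a := by
  rw [← inr_mul, one_mul]

theorem inr_mul_inr_one (a : A) : inr a * (inr 1 : Unitization R A) = inr a := by
  rw [← inr_mul, mul_one]

theorem one_sub_inr_one_mul_inr (a : A) : (1 - inr 1 : Unitization R A) * inr a = 0 := by
  rw [sub_mul, one_mul, inr_one_mul_inr, sub_self]

theorem inr_mul_one_sub_inr_one (a : A) : inr a * (1 - inr 1 : Unitization R A) = 0 := by
  rw [mul_sub, mul_one, inr_mul_inr_one, sub_self]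

theorem isIdempotentElem_inr_one : IsIdempotentElem (inr 1 : Unitization R A) :=
  inr_one_mul_inr 1

variable (R A) in
def comulOne : Unitization R A ⊗[R] Unitization R A :=
  (1 - inr 1) ⊗ₜ (1 - inr 1) + inr 1 ⊗ₜ inr 1

theorem isIdempotentElem_comulOne : IsIdempotentElem (comulOne R A) := by
  have hu := isIdempotentElem_inr_one (R := R) (A := A) |>.one_sub
  simp only [IsIdempotentElem, comulOne, add_mul, mul_add, Algebra.TensorProduct.tmul_mul_tmul,
    hu.eq, isIdempotentElem_inr_one.eq, one_sub_inr_one_mul_inr, inr_mul_one_sub_inr_one,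
    tmul_zero, add_zero, zero_add]

theorem comulOne_mul_map_inr (s : A ⊗[R] A) :
    comulOne R A * map (inrHom R R A) (inrHom R R A) s = map (inrHom R R A) (inrHom R R A) s := by
  induction s with
  | zero => simp
  | add s s' hs hs' => simp only [map_add, mul_add, hs, hs']
  | tmul a b =>
    simp only [comulOne, map_tmul, inrHom_apply, add_mul, Algebra.TensorProduct.tmul_mul_tmul,
      one_sub_inr_one_mul_inr, inr_one_mul_inr, zero_tmul, zero_add]

theorem map_inr_mul_comulOne (s : A ⊗[R] A) :
    map (inrHom R R A) (inrHom R R A) s * comulOne R A = map (inrHom R R A) (inrHom R R A) s := by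
  induction s with
  | zero => simp
  | add s s' hs hs' => simp only [map_add, add_mul, hs, hs']
  | tmul a b =>
    simp only [comulOne, map_tmul, inrHom_apply, mul_add, Algebra.TensorProduct.tmul_mul_tmul,
      inr_mul_one_sub_inr_one, inr_mul_inr_one, zero_tmul, zero_add]

end

section Bialgebra

variable {K B : Type*} [CommRing K] [Ring B] [Bialgebra K B]
  {Δ : Unitization K B →ₗ[K] Unitization K B ⊗[K] Unitization K B}
  {ε : Unitization K B →ₗ[K] K}

theorem comul_inr_one_of_comul_inr
    (hΔr : ∀ b : B, Δ (inr b) = map (inrHom K K B) (inrHom K K B) (Coalgebra.comul b)) :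
    Δ (inr 1) = inr 1 ⊗ₜ inr 1 := by
  rw [hΔr, Bialgebra.comul_one, Algebra.TensorProduct.one_def, map_tmul, inrHom_apply]

theorem comul_one_sub_inr_one_of_comul_inr
    (hΔ1 : Δ 1 = comulOne K B)
    (hΔr : ∀ b : B, Δ (inr b) = map (inrHom K K B) (inrHom K K B) (Coalgebra.comul b)) :
    Δ (1 - inr 1) = (1 - inr 1) ⊗ₜ (1 - inr 1) := by
  rw [map_sub, hΔ1, comulOne, comul_inr_one_of_comul_inr hΔr, add_sub_cancel_right]

theorem counit_inr_one_of_counit_inr (hεr : ∀ b : B, ε (inr b) = Coalgebra.counit b) :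
    ε (inr 1) = 1 := by
  rw [hεr, Bialgebra.counit_one]

theorem counit_one_sub_inr_one_of_counit_inr (hε1 : ε 1 = 2)
    (hεr : ∀ b : B, ε (inr b) = Coalgebra.counit b) : ε (1 - inr 1) = 1 := by
  rw [map_sub, hε1, counit_inr_one_of_counit_inr hεr]
  norm_num

theorem coassoc_apply_of_comul_one_of_comul_inr
    (hΔ1 : Δ 1 = comulOne K B)
    (hΔr : ∀ b : B, Δ (inr b) = map (inrHom K K B) (inrHom K K B) (Coalgebra.comul b))
    (v : Unitization K B) :
    TensorProduct.assoc K _ _ _ (map Δ LinearMap.id (Δ v)) = map LinearMap.id Δ (Δ v) := by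
  have h1 :
      TensorProduct.assoc K _ _ _ (map Δ LinearMap.id (Δ 1)) = map LinearMap.id Δ (Δ 1) := by
    rw [← sub_add_cancel (1 : Unitization K B) (inr 1)]
    simp only [map_add, coassoc_apply_of_comul_eq_tmul (comul_inr_one_of_comul_inr hΔr),
      coassoc_apply_of_comul_eq_tmul (comul_one_sub_inr_one_of_comul_inr hΔ1 hΔr)]
  have hr := coassoc_apply_of_comul_comp (i := inrHom K K B) hΔr
  simp only [inrHom_apply] at hr
  induction v using induction_smul_one with
  | smul_one_add_inr r a => simp only [map_add, map_smul, h1, hr]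

theorem lid_map_counit_apply_of_comul_one_of_comul_inr
    (hΔ1 : Δ 1 = comulOne K B)
    (hΔr : ∀ b : B, Δ (inr b) = map (inrHom K K B) (inrHom K K B) (Coalgebra.comul b))
    (hε1 : ε 1 = 2) (hεr : ∀ b : B, ε (inr b) = Coalgebra.counit b) (v : Unitization K B) :
    TensorProduct.lid K _ (map ε LinearMap.id (Δ v)) = v := by
  have h1 : TensorProduct.lid K _ (map ε LinearMap.id (Δ 1)) = 1 := by
    rw [← sub_add_cancel (1 : Unitization K B) (inr 1)]
    simp only [map_add,
      lid_map_counit_apply_of_comul_eq_tmul (comul_inr_one_of_comul_inr hΔr)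
        (counit_inr_one_of_counit_inr hεr),
      lid_map_counit_apply_of_comul_eq_tmul (comul_one_sub_inr_one_of_comul_inr hΔ1 hΔr)
        (counit_one_sub_inr_one_of_counit_inr hε1 hεr)]
  have hr := lid_map_counit_apply_of_comul_comp (i := inrHom K K B) hΔr hεr
  simp only [inrHom_apply] at hr
  induction v using induction_smul_one with
  | smul_one_add_inr r a => simp only [map_add, map_smul, h1, hr]

theorem rid_map_counit_apply_of_comul_one_of_comul_inr
    (hΔ1 : Δ 1 = comulOne K B)
    (hΔr : ∀ b : B, Δ (inr b) = map (inrHom K K B) (inrHom K K B) (Coalgebra.comul b))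
    (hε1 : ε 1 = 2) (hεr : ∀ b : B, ε (inr b) = Coalgebra.counit b) (v : Unitization K B) :
    TensorProduct.rid K _ (map LinearMap.id ε (Δ v)) = v := by
  have h1 : TensorProduct.rid K _ (map LinearMap.id ε (Δ 1)) = 1 := by
    rw [← sub_add_cancel (1 : Unitization K B) (inr 1)]
    simp only [map_add,
      rid_map_counit_apply_of_comul_eq_tmul (comul_inr_one_of_comul_inr hΔr)
        (counit_inr_one_of_counit_inr hεr),
      rid_map_counit_apply_of_comul_eq_tmul (comul_one_sub_inr_one_of_comul_inr hΔ1 hΔr)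
        (counit_one_sub_inr_one_of_counit_inr hε1 hεr)]
  have hr := rid_map_counit_apply_of_comul_comp (i := inrHom K K B) hΔr hεr
  simp only [inrHom_apply] at hr
  induction v using induction_smul_one with
  | smul_one_add_inr r a => simp only [map_add, map_smul, h1, hr]

theorem map_mul_of_comul_one_of_comul_inr
    (hΔ1 : Δ 1 = comulOne K B)
    (hΔr : ∀ b : B, Δ (inr b) = map (inrHom K K B) (inrHom K K B) (Coalgebra.comul b))
    (x y : Unitization K B) : Δ (x * y) = Δ x * Δ y := by
  have hinr (a b : B) : Δ (inr (a * b)) = Δ (inr a) * Δ (inr b) := by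
    rw [hΔr, Bialgebra.comul_mul, map_mul_of_map_mul (fun _ _ => inr_mul K _ _)
      (fun _ _ => inr_mul K _ _), hΔr, hΔr]
  have key : (LinearMap.mul K (Unitization K B)).compr₂ Δ =
      (LinearMap.mul K (Unitization K B ⊗[K] Unitization K B)).compl₁₂ Δ Δ := by
    refine linearMap_ext_one (linearMap_ext_one ?_ fun b => ?_) fun a =>
      linearMap_ext_one ?_ fun b => ?_ <;>
    simp only [LinearMap.compr₂_apply, LinearMap.compl₁₂_apply, LinearMap.mul_apply']
    · rw [mul_one, hΔ1, isIdempotentElem_comulOne.eq]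
    · rw [one_mul, hΔ1, hΔr, comulOne_mul_map_inr]
    · rw [mul_one, hΔ1, hΔr, map_inr_mul_comulOne]
    · rw [← inr_mul, hinr]
  exact LinearMap.congr_fun₂ key x y

end Bialgebra

end Unitization

theorem stmt14_general (K B : Type*) [Field K] [Ring B] [Bialgebra K B]
    (Δ : Unitization K B →ₗ[K] Unitization K B ⊗[K] Unitization K B)
    (ε : Unitization K B →ₗ[K] K)
    (hΔ1 : Δ 1 = ((1 : Unitization K B) - inr (1 : B)) ⊗ₜ[K]
        ((1 : Unitization K B) - inr (1 : B)) + (inr (1 : B)) ⊗ₜ[K] (inr (1 : B)))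
    (hΔr : ∀ b : B, Δ (inr b)
        = TensorProduct.map (inrHom K K B) (inrHom K K B) (Coalgebra.comul b))
    (hε1 : ε 1 = 2)
    (hεr : ∀ b : B, ε (inr b) = Coalgebra.counit b) :
    -- coassociativity
    (∀ v : Unitization K B,
        (TensorProduct.assoc K (Unitization K B) (Unitization K B) (Unitization K B))
            (TensorProduct.map Δ LinearMap.id (Δ v))
          = TensorProduct.map LinearMap.id Δ (Δ v))
    -- multiplicativity
    ∧ (∀ x y : Unitization K B, Δ (x * y) = Δ x * Δ y)
    -- counit axioms
    ∧ (∀ v : Unitization K B,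
        (TensorProduct.lid K (Unitization K B))
            (TensorProduct.map ε LinearMap.id (Δ v)) = v
        ∧ (TensorProduct.rid K (Unitization K B))
            (TensorProduct.map LinearMap.id ε (Δ v)) = v) :=
  ⟨coassoc_apply_of_comul_one_of_comul_inr hΔ1 hΔr, map_mul_of_comul_one_of_comul_inr hΔ1 hΔr,
    fun v => ⟨lid_map_counit_apply_of_comul_one_of_comul_inr hΔ1 hΔr hε1 hεr v,
      rid_map_counit_apply_of_comul_one_of_comul_inr hΔ1 hΔr hε1 hεr v⟩⟩

/-- extending the comultiplication and counit of a bialgebra `B`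
to its unitalization `B' = K·e₁ ⊕ B` by `Δ(e₁) = (e₁−e₂)⊗(e₁−e₂) + e₂⊗e₂`
and `ε(e₁) = 2` yields a coassociative, multiplicative `Δ` and a counit `ε`. -/
theorem stmt14 (K B : Type*) [Field K] [CharZero K] [Ring B] [Bialgebra K B]
    (Δ : Unitization K B →ₗ[K] Unitization K B ⊗[K] Unitization K B)
    (ε : Unitization K B →ₗ[K] K)
    (hΔ1 : Δ 1 = ((1 : Unitization K B) - inr (1 : B)) ⊗ₜ[K]
        ((1 : Unitization K B) - inr (1 : B)) + (inr (1 : B)) ⊗ₜ[K] (inr (1 : B)))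
    (hΔr : ∀ b : B, Δ (inr b)
        = TensorProduct.map (inrHom K K B) (inrHom K K B) (Coalgebra.comul b))
    (hε1 : ε 1 = 2)
    (hεr : ∀ b : B, ε (inr b) = Coalgebra.counit b) :
    -- coassociativity
    (∀ v : Unitization K B,
        (TensorProduct.assoc K (Unitization K B) (Unitization K B) (Unitization K B))
            (TensorProduct.map Δ LinearMap.id (Δ v))
          = TensorProduct.map LinearMap.id Δ (Δ v))
    -- multiplicativity
    ∧ (∀ x y : Unitization K B, Δ (x * y) = Δ x * Δ y)
    -- counit axioms
    ∧ (∀ v : Unitization K B,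
        (TensorProduct.lid K (Unitization K B))
            (TensorProduct.map ε LinearMap.id (Δ v)) = v
        ∧ (TensorProduct.rid K (Unitization K B))
            (TensorProduct.map LinearMap.id ε (Δ v)) = v) :=
  stmt14_general K B Δ ε hΔ1 hΔr hε1 hεr
end

section
/- With B a bialgebra with unit e₂ and B' its unitalization by e₁, Δ(e₁) = (e₁−e₂)⊗(e₁−e₂) + e₂⊗e₂, ε(e₁) = 2, the weak counit axiom holds in B': for all x, z ∈ B', ε(x·e₁·z) = ε(x·z) equals Σ ε(x·(e₁)₍₁₎)ε((e₁)₍₂₎·z) = ε(x·(e₁−e₂))ε((e₁−e₂)·z) + ε(x·e₂)ε(e₂·z). -/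
open TensorProduct Unitization

/-- the weak counit axiom holds in the unitalization `B'` of a
bialgebra `B`: for all `x, z ∈ B'`,
`ε(x·e₁·z) = ε(x·(e₁−e₂))ε((e₁−e₂)·z) + ε(x·e₂)ε(e₂·z)`, and `ε(x·e₁·z) = ε(x·z)`. -/
theorem stmt15 (K B : Type*) [Field K] [CharZero K] [Ring B] [Bialgebra K B]
    (ε : Unitization K B →ₗ[K] K)
    (hε1 : ε 1 = 2)
    (hεr : ∀ b : B, ε (inr b) = Coalgebra.counit b) :
    ∀ x z : Unitization K B,
      ε (x * 1 * z) = ε (x * z)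
      ∧ ε (x * 1 * z)
          = ε (x * ((1 : Unitization K B) - inr (1 : B)))
              * ε (((1 : Unitization K B) - inr (1 : B)) * z)
            + ε (x * inr (1 : B)) * ε (inr (1 : B) * z) := by
  intro x z
  refine ⟨by rw [mul_one], ?_⟩
  rw [mul_one]
  induction x using Unitization.ind with
  | _ a b =>
  induction z using Unitization.ind with
  | _ c d =>
  have h1 : (1 : Unitization K B) = inl 1 := rfl
  simp only [h1, add_mul, mul_add, sub_mul, mul_sub, inl_mul_inl,
    inl_mul_inr, inr_mul_inl, ← inr_mul, map_add, map_sub, map_smul,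
    hεr, Bialgebra.counit_mul, Bialgebra.counit_one, map_one,
    mul_one, one_mul, one_smul, smul_eq_mul]
  have h2 : ∀ r : K, ε (inl r) = 2 * r := fun r => by
    have : (inl r : Unitization K B) = r • (1 : Unitization K B) := by
      ext <;> simp
    rw [this, map_smul, hε1, smul_eq_mul, mul_comm]
  simp only [h2]
  ring
end

section
/- Let H be a Hopf algebra over K with unit e₂ and antipode S_B, and let H' = K·e₁ ⊕ H be its unitalization with new unit e₁. Extend Δ, ε, S by Δ(e₁) = (e₁−e₂)⊗(e₁−e₂) + e₂⊗e₂, ε(e₁) = 2, S(e₁) = e₁. Then the antipode axioms for a weak Hopf algebra hold at e₁: m(id⊗S)Δ(e₁) = (ε⊗id)(Δ(e₁)•(e₁⊗e₁)), m(S⊗id)Δ(e₁) = (id⊗ε)((e₁⊗e₁)•Δ(e₁)), and m(m⊗id)(S⊗id⊗S)(Δ⊗id)Δ(e₁) = e₁. -/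
open TensorProduct Unitization

/-!
Write `Δ(e₁) = p ⊗ p + q ⊗ q` with `p = e₁ - e₂` and `q = e₂`. These are complementary
idempotents, each grouplike with counit `1` and fixed by `S` (for `p` because `e₁` and `e₂`
both are). On such a `g ⊗ g` each of the three weak antipode expressions evaluates to `g`,
so by linearity all of them equal `p + q = e₁`.
-/

section FixedGroupLike

variable {R A : Type*} [CommSemiring R] [Semiring A] [Algebra R A]
  {Δ : A →ₗ[R] A ⊗[R] A} {ε : A →ₗ[R] R} {S : A →ₗ[R] A} {g : A}

lemma mul'_map_id_antipode_tmul_self (hS : S g = g) (hg : IsIdempotentElem g) :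
    LinearMap.mul' R A (map LinearMap.id S (g ⊗ₜ[R] g)) = g := by
  simpa [hS] using hg.eq

lemma mul'_map_antipode_id_tmul_self (hS : S g = g) (hg : IsIdempotentElem g) :
    LinearMap.mul' R A (map S LinearMap.id (g ⊗ₜ[R] g)) = g := by
  simpa [hS] using hg.eq

lemma lid_map_counit_id_tmul_self (hε : ε g = 1) :
    TensorProduct.lid R A (map ε LinearMap.id (g ⊗ₜ[R] g)) = g := by
  simp [hε]

lemma rid_map_id_counit_tmul_self (hε : ε g = 1) :
    TensorProduct.rid R A (map LinearMap.id ε (g ⊗ₜ[R] g)) = g := by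
  simp [hε]

lemma mul'_map_mul'_map_antipode_comul_tmul_self (hΔ : Δ g = g ⊗ₜ[R] g) (hS : S g = g)
    (hg : IsIdempotentElem g) :
    LinearMap.mul' R A (map (LinearMap.mul' R A) LinearMap.id
      (map (map S LinearMap.id) S (map Δ LinearMap.id (g ⊗ₜ[R] g)))) = g := by
  simp [hΔ, hS, hg.eq]

theorem weak_antipode_axioms_at_one {p q : A} (hpq : p + q = 1)
    (hΔ1 : Δ 1 = p ⊗ₜ[R] p + q ⊗ₜ[R] q)
    (hΔp : Δ p = p ⊗ₜ[R] p) (hΔq : Δ q = q ⊗ₜ[R] q)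
    (hεp : ε p = 1) (hεq : ε q = 1) (hSp : S p = p) (hSq : S q = q)
    (hp : IsIdempotentElem p) (hq : IsIdempotentElem q) :
    LinearMap.mul' R A (map LinearMap.id S (Δ 1))
      = TensorProduct.lid R A (map ε LinearMap.id (Δ 1 * ((1 : A) ⊗ₜ[R] (1 : A))))
    ∧ LinearMap.mul' R A (map S LinearMap.id (Δ 1))
        = TensorProduct.rid R A (map LinearMap.id ε (((1 : A) ⊗ₜ[R] (1 : A)) * Δ 1))
    ∧ LinearMap.mul' R A (map (LinearMap.mul' R A) LinearMap.id
        (map (map S LinearMap.id) S (map Δ LinearMap.id (Δ 1)))) = 1 := by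
  rw [← Algebra.TensorProduct.one_def, mul_one, one_mul, hΔ1]
  simp only [map_add, hpq, and_self,
    mul'_map_id_antipode_tmul_self hSp hp, mul'_map_id_antipode_tmul_self hSq hq,
    mul'_map_antipode_id_tmul_self hSp hp, mul'_map_antipode_id_tmul_self hSq hq,
    lid_map_counit_id_tmul_self hεp, lid_map_counit_id_tmul_self hεq,
    rid_map_id_counit_tmul_self hεp, rid_map_id_counit_tmul_self hεq,
    mul'_map_mul'_map_antipode_comul_tmul_self hΔp hSp hp,
    mul'_map_mul'_map_antipode_comul_tmul_self hΔq hSq hq]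

end FixedGroupLike

theorem stmt17_general (K H : Type*) [Field K] [Ring H] [HopfAlgebra K H]
    (Δ : Unitization K H →ₗ[K] Unitization K H ⊗[K] Unitization K H)
    (ε : Unitization K H →ₗ[K] K)
    (S : Unitization K H →ₗ[K] Unitization K H)
    (hΔ1 : Δ 1 = ((1 : Unitization K H) - inr (1 : H)) ⊗ₜ[K]
        ((1 : Unitization K H) - inr (1 : H)) + (inr (1 : H)) ⊗ₜ[K] (inr (1 : H)))
    (hΔr : ∀ b : H, Δ (inr b)
        = TensorProduct.map (inrHom K K H) (inrHom K K H) (Coalgebra.comul b))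
    (hε1 : ε 1 = 2)
    (hεr : ∀ b : H, ε (inr b) = Coalgebra.counit b)
    (hS1 : S 1 = 1)
    (hSr : ∀ b : H, S (inr b) = inr ((HopfAlgebra.antipode K : H →ₗ[K] H) b)) :
    LinearMap.mul' K (Unitization K H) (TensorProduct.map LinearMap.id S (Δ 1))
      = (TensorProduct.lid K (Unitization K H))
          (TensorProduct.map ε LinearMap.id
            (Δ 1 * ((1 : Unitization K H) ⊗ₜ[K] (1 : Unitization K H))))
    ∧ LinearMap.mul' K (Unitization K H) (TensorProduct.map S LinearMap.id (Δ 1))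
        = (TensorProduct.rid K (Unitization K H))
            (TensorProduct.map LinearMap.id ε
              (((1 : Unitization K H) ⊗ₜ[K] (1 : Unitization K H)) * Δ 1))
    ∧ LinearMap.mul' K (Unitization K H)
        (TensorProduct.map (LinearMap.mul' K (Unitization K H)) LinearMap.id
          (TensorProduct.map (TensorProduct.map S LinearMap.id) S
            (TensorProduct.map Δ LinearMap.id (Δ 1)))) = 1 := by
  set q : Unitization K H := inr (1 : H)
  have hΔq : Δ q = q ⊗ₜ[K] q := by
    simp [q, hΔr, Bialgebra.comul_one, Algebra.TensorProduct.one_def]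
  have hεq : ε q = 1 := by rw [hεr, Bialgebra.counit_one]
  have hSq : S q = q := by rw [hSr, HopfAlgebra.antipode_one]
  have hq : IsIdempotentElem q := by rw [IsIdempotentElem, ← inr_mul, one_mul]
  refine weak_antipode_axioms_at_one (sub_add_cancel 1 q) hΔ1 ?_ hΔq ?_ hεq ?_ hSq hq.one_sub hq
  · rw [map_sub, hΔ1, hΔq, add_sub_cancel_right]
  · rw [map_sub, hε1, hεq]; norm_num
  · rw [map_sub, hS1, hSq]

/-- for the unitalization `H' = K·e₁ ⊕ H` of a Hopf algebra `H`
(with `Δ(e₁) = (e₁−e₂)⊗(e₁−e₂) + e₂⊗e₂`, `ε(e₁) = 2`, `S(e₁) = e₁`), the three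
weak Hopf antipode axioms hold at `e₁`. -/
theorem stmt17 (K H : Type*) [Field K] [CharZero K] [Ring H] [HopfAlgebra K H]
    (Δ : Unitization K H →ₗ[K] Unitization K H ⊗[K] Unitization K H)
    (ε : Unitization K H →ₗ[K] K)
    (S : Unitization K H →ₗ[K] Unitization K H)
    (hΔ1 : Δ 1 = ((1 : Unitization K H) - inr (1 : H)) ⊗ₜ[K]
        ((1 : Unitization K H) - inr (1 : H)) + (inr (1 : H)) ⊗ₜ[K] (inr (1 : H)))
    (hΔr : ∀ b : H, Δ (inr b)
        = TensorProduct.map (inrHom K K H) (inrHom K K H) (Coalgebra.comul b))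
    (hε1 : ε 1 = 2)
    (hεr : ∀ b : H, ε (inr b) = Coalgebra.counit b)
    (hS1 : S 1 = 1)
    (hSr : ∀ b : H, S (inr b) = inr ((HopfAlgebra.antipode K : H →ₗ[K] H) b)) :
    LinearMap.mul' K (Unitization K H) (TensorProduct.map LinearMap.id S (Δ 1))
      = (TensorProduct.lid K (Unitization K H))
          (TensorProduct.map ε LinearMap.id
            (Δ 1 * ((1 : Unitization K H) ⊗ₜ[K] (1 : Unitization K H))))
    ∧ LinearMap.mul' K (Unitization K H) (TensorProduct.map S LinearMap.id (Δ 1))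
        = (TensorProduct.rid K (Unitization K H))
            (TensorProduct.map LinearMap.id ε
              (((1 : Unitization K H) ⊗ₜ[K] (1 : Unitization K H)) * Δ 1))
    ∧ LinearMap.mul' K (Unitization K H)
        (TensorProduct.map (LinearMap.mul' K (Unitization K H)) LinearMap.id
          (TensorProduct.map (TensorProduct.map S LinearMap.id) S
            (TensorProduct.map Δ LinearMap.id (Δ 1)))) = 1 :=
  stmt17_general K H Δ ε S hΔ1 hΔr hε1 hεr hS1 hSr
end

section
/- Consider Sweedler's 4-dimensional Hopf algebra H over K (char K ≠ 2) generated by c, x with c² = e, x² = 0, x·c = −c·x, where e is the unit, and let H' = K·1 ⊕ H be the 5-dimensional algebra obtained by adjoining a new unit 1. With Δ(1) = (1−e)⊗(1−e) + e⊗e, Δ(e) = e⊗e, Δ(c) = c⊗c, Δ(x) = c⊗x + x⊗e, ε(1) = 2, ε(e) = ε(c) = 1, ε(x) = 0, the map Δ is coassociative and multiplicative on H'; in particular Δ(x)•Δ(x) = 0 = Δ(x²) and Δ(x)•Δ(c) = −Δ(c)•Δ(x). -/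
/-!
Coassociativity and multiplicativity are linear, resp. bilinear, identities in the argument(s)
of `Δ`, so it suffices to check them on the basis `1, e, c, x, c·x`. Multiplicativity on `c, x`
gives `Δ(c·x) = e ⊗ c·x + c·x ⊗ c`, and the remaining checks are computations with the
multiplication table of `H'`. The identities for `Δ(x)²` and `Δ(x)Δ(c)` are multiplicativity
applied to `x² = 0` and `x·c = −c·x`.
-/

open TensorProduct

section ExtensionFromBasis

variable {ι K A B : Type*} [CommSemiring K]

theorem Module.Basis.coassoc_of_forall [AddCommMonoid A] [Module K A]
    (b : Module.Basis ι K A) (Δ : A →ₗ[K] A ⊗[K] A)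
    (h : ∀ i, TensorProduct.assoc K A A A (map Δ LinearMap.id (Δ (b i)))
      = map LinearMap.id Δ (Δ (b i)))
    (v : A) :
    TensorProduct.assoc K A A A (map Δ LinearMap.id (Δ v)) = map LinearMap.id Δ (Δ v) :=
  LinearMap.congr_fun
    (f := (TensorProduct.assoc K A A A).toLinearMap ∘ₗ map Δ LinearMap.id ∘ₗ Δ)
    (g := map LinearMap.id Δ ∘ₗ Δ) (b.ext h) v

theorem Module.Basis.map_mul_of_forall [Semiring A] [Algebra K A] [Semiring B] [Algebra K B]
    (b : Module.Basis ι K A) (f : A →ₗ[K] B)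
    (h : ∀ i j, f (b i * b j) = f (b i) * f (b j)) (v w : A) :
    f (v * w) = f v * f w :=
  LinearMap.congr_fun₂ (f := (LinearMap.mul K A).compr₂ f)
    (g := (LinearMap.mul K B).compl₁₂ f f) (b.ext fun i => b.ext fun j => h i j) v w

end ExtensionFromBasis

namespace Sweedler

variable {K A : Type*} [CommRing K]

theorem comul_coassoc [AddCommGroup A] [Module K A] (b : Module.Basis (Fin 5) K A)
    (u e c x y : A) (hb0 : b 0 = u) (hb1 : b 1 = e) (hb2 : b 2 = c) (hb3 : b 3 = x)
    (hb4 : b 4 = y) (Δ : A →ₗ[K] A ⊗[K] A)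
    (hΔu : Δ u = (u - e) ⊗ₜ[K] (u - e) + e ⊗ₜ[K] e)
    (hΔe : Δ e = e ⊗ₜ[K] e) (hΔc : Δ c = c ⊗ₜ[K] c)
    (hΔx : Δ x = c ⊗ₜ[K] x + x ⊗ₜ[K] e) (hΔy : Δ y = e ⊗ₜ[K] y + y ⊗ₜ[K] c) (v : A) :
    TensorProduct.assoc K A A A (map Δ LinearMap.id (Δ v)) = map LinearMap.id Δ (Δ v) := by
  refine b.coassoc_of_forall Δ (fun i => ?_) v
  fin_cases i <;>
    simp [hb0, hb1, hb2, hb3, hb4, hΔu, hΔe, hΔc, hΔx, hΔy, tmul_add, add_tmul,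
      tmul_sub, sub_tmul] <;>
    abel

variable [Ring A] [Algebra K A] {e c x : A}

theorem comul_c_mul_x (hcc : c * c = e) (hce : c * e = c) (Δ : A →ₗ[K] A ⊗[K] A)
    (hΔc : Δ c = c ⊗ₜ[K] c) (hΔx : Δ x = c ⊗ₜ[K] x + x ⊗ₜ[K] e)
    (hΔcx : Δ (c * x) = Δ c * Δ x) :
    Δ (c * x) = e ⊗ₜ[K] (c * x) + (c * x) ⊗ₜ[K] c := by
  rw [hΔcx, hΔc, hΔx, mul_add, Algebra.TensorProduct.tmul_mul_tmul,
    Algebra.TensorProduct.tmul_mul_tmul, hcc, hce]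

theorem comul_map_mul (b : Module.Basis (Fin 5) K A)
    (hb0 : b 0 = 1) (hb1 : b 1 = e) (hb2 : b 2 = c) (hb3 : b 3 = x) (hb4 : b 4 = c * x)
    (hee : e * e = e) (hcc : c * c = e) (hxx : x * x = 0) (hxc : x * c = -(c * x))
    (hec : e * c = c) (hce : c * e = c) (hex : e * x = x) (hxe : x * e = x)
    (Δ : A →ₗ[K] A ⊗[K] A)
    (hΔ1 : Δ 1 = (1 - e) ⊗ₜ[K] (1 - e) + e ⊗ₜ[K] e) (hΔe : Δ e = e ⊗ₜ[K] e)
    (hΔc : Δ c = c ⊗ₜ[K] c) (hΔx : Δ x = c ⊗ₜ[K] x + x ⊗ₜ[K] e)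
    (hΔcx : Δ (c * x) = e ⊗ₜ[K] (c * x) + (c * x) ⊗ₜ[K] c) (v w : A) :
    Δ (v * w) = Δ v * Δ w := by
  have hecx : e * (c * x) = c * x := by rw [← mul_assoc, hec]
  have hccx : c * (c * x) = x := by rw [← mul_assoc, hcc, hex]
  have hxcx : x * (c * x) = 0 := by
    rw [← mul_assoc, hxc, neg_mul, mul_assoc, hxx, mul_zero, neg_zero]
  have hcxe : c * x * e = c * x := by rw [mul_assoc, hxe]
  have hcxc : c * x * c = -x := by rw [mul_assoc, hxc, mul_neg, hccx]
  have hcxx : c * x * x = 0 := by rw [mul_assoc, hxx, mul_zero]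
  have hcxcx : c * x * (c * x) = 0 := by rw [mul_assoc, hxcx, mul_zero]
  refine b.map_mul_of_forall Δ (fun i j => ?_) v w
  fin_cases i <;> fin_cases j <;>
    simp [hb0, hb1, hb2, hb3, hb4, hee, hcc, hxx, hxc, hec, hce, hex, hxe, hecx, hccx, hxcx,
      hcxe, hcxc, hcxx, hcxcx, hΔ1, hΔe, hΔc, hΔx, hΔcx, Algebra.TensorProduct.tmul_mul_tmul,
      mul_add, add_mul, sub_mul, mul_sub, tmul_sub, sub_tmul, tmul_neg, neg_tmul] <;>
    abel

end Sweedler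

theorem stmt18_general (K H' : Type*) [Field K]
    [Ring H'] [Algebra K H']
    (e c x : H')
    (b : Module.Basis (Fin 5) K H')
    (hb0 : b 0 = 1) (hb1 : b 1 = e) (hb2 : b 2 = c) (hb3 : b 3 = x)
    (hb4 : b 4 = c * x)
    (hee : e * e = e) (hcc : c * c = e) (hxx : x * x = 0) (hxc : x * c = -(c * x))
    (hec : e * c = c) (hce : c * e = c) (hex : e * x = x) (hxe : x * e = x)
    (Δ : H' →ₗ[K] H' ⊗[K] H')
    (hΔ1 : Δ 1 = (1 - e) ⊗ₜ[K] (1 - e) + e ⊗ₜ[K] e)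
    (hΔe : Δ e = e ⊗ₜ[K] e)
    (hΔc : Δ c = c ⊗ₜ[K] c)
    (hΔx : Δ x = c ⊗ₜ[K] x + x ⊗ₜ[K] e)
    (hΔcx : Δ (c * x) = Δ c * Δ x) :
    (∀ v : H',
        (TensorProduct.assoc K H' H' H')
            (TensorProduct.map Δ LinearMap.id (Δ v))
          = TensorProduct.map LinearMap.id Δ (Δ v))
    ∧ (∀ v w : H', Δ (v * w) = Δ v * Δ w)
    ∧ Δ x * Δ x = 0
    ∧ Δ (x * x) = 0
    ∧ Δ x * Δ c = -(Δ c * Δ x) := by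
  have hΔcx' := Sweedler.comul_c_mul_x hcc hce Δ hΔc hΔx hΔcx
  have map_mul := Sweedler.comul_map_mul b hb0 hb1 hb2 hb3 hb4 hee hcc hxx hxc hec hce hex hxe
    Δ hΔ1 hΔe hΔc hΔx hΔcx'
  refine ⟨Sweedler.comul_coassoc b 1 e c x (c * x) hb0 hb1 hb2 hb3 hb4 Δ hΔ1 hΔe hΔc hΔx hΔcx',
    map_mul, ?_, ?_, ?_⟩
  · rw [← map_mul, hxx, map_zero]
  · rw [hxx, map_zero]
  · rw [← map_mul, ← map_mul, hxc, map_neg]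

/-- on the 5-dimensional algebra `H' = K·1 ⊕ H` obtained by adjoining
a new unit `1` to Sweedler's 4-dimensional Hopf algebra `H` (unit `e`, generators
`c, x` with `c² = e`, `x² = 0`, `x·c = −c·x`), the comultiplication defined by
`Δ(1) = (1−e)⊗(1−e) + e⊗e`, `Δ(e) = e⊗e`, `Δ(c) = c⊗c`, `Δ(x) = c⊗x + x⊗e`
(and `Δ(c·x) = Δ(c)•Δ(x)`) is coassociative and multiplicative; in particular
`Δ(x)•Δ(x) = 0 = Δ(x²)` and `Δ(x)•Δ(c) = −Δ(c)•Δ(x)`. -/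
theorem stmt18 (K H' : Type*) [Field K] (h2 : (2 : K) ≠ 0)
    [Ring H'] [Algebra K H']
    (e c x : H')
    (b : Module.Basis (Fin 5) K H')
    (hb0 : b 0 = 1) (hb1 : b 1 = e) (hb2 : b 2 = c) (hb3 : b 3 = x)
    (hb4 : b 4 = c * x)
    (hee : e * e = e) (hcc : c * c = e) (hxx : x * x = 0) (hxc : x * c = -(c * x))
    (hec : e * c = c) (hce : c * e = c) (hex : e * x = x) (hxe : x * e = x)
    (Δ : H' →ₗ[K] H' ⊗[K] H') (ε : H' →ₗ[K] K)
    (hΔ1 : Δ 1 = (1 - e) ⊗ₜ[K] (1 - e) + e ⊗ₜ[K] e)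
    (hΔe : Δ e = e ⊗ₜ[K] e)
    (hΔc : Δ c = c ⊗ₜ[K] c)
    (hΔx : Δ x = c ⊗ₜ[K] x + x ⊗ₜ[K] e)
    (hΔcx : Δ (c * x) = Δ c * Δ x)
    (hε1 : ε 1 = 2) (hεe : ε e = 1) (hεc : ε c = 1) (hεx : ε x = 0)
    (hεcx : ε (c * x) = 0) :
    (∀ v : H',
        (TensorProduct.assoc K H' H' H')
            (TensorProduct.map Δ LinearMap.id (Δ v))
          = TensorProduct.map LinearMap.id Δ (Δ v))
    ∧ (∀ v w : H', Δ (v * w) = Δ v * Δ w)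
    ∧ Δ x * Δ x = 0
    ∧ Δ (x * x) = 0
    ∧ Δ x * Δ c = -(Δ c * Δ x) :=
  stmt18_general K H' e c x b hb0 hb1 hb2 hb3 hb4 hee hcc hxx hxc hec hce hex hxe Δ hΔ1 hΔe hΔc hΔx
    hΔcx
end
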